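/- Let p and q be distinct primes with q > p and let n = pq. Then the metric dimension of the barycentric subdivision of the zero divisor graph of Z_n is at least q - 2, i.e. dim(BS(Γ(Z_{pq}))) ≥ q - 2; equivalently, every resolving set of BS(Γ(Z_{pq})) has cardinality at least q - 2. -/

import Mathlib

open SimpleGraph

section IsoDist
variable {V V' : Type*} {G : SimpleGraph V} {G' : SimpleGraph V'}

lemma iso_dist_le (φ : G ≃g G') (x y : V) : G'.dist (φ x) (φ y) ≤ G.dist x y := by
  by_cases h : G.Reachable x y
  · obtain ⟨w, hw⟩ := h.exists_walk_length_eq_dist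
    calc G'.dist (φ x) (φ y) ≤ (w.map φ.toHom).length := SimpleGraph.dist_le _
      _ = G.dist x y := by rw [SimpleGraph.Walk.length_map, hw]
  · rw [SimpleGraph.dist_eq_zero_of_not_reachable h,
      SimpleGraph.dist_eq_zero_of_not_reachable]
    intro hr
    have := hr.map φ.symm.toHom
    refine h ?_
    convert this using 2 <;> simp

lemma iso_dist_eq (φ : G ≃g G') (x y : V) : G'.dist (φ x) (φ y) = G.dist x y := by
  refine le_antisymm (iso_dist_le φ x y) ?_
  have := iso_dist_le φ.symm (φ x) (φ y)
  simpa using this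

end IsoDist

/-- The nonzero zero-divisors of `ZMod n`. -/
def ZDVert (n : ℕ) : Type :=
  {a : ZMod n // a ≠ 0 ∧ ∃ b : ZMod n, b ≠ 0 ∧ a * b = 0}

/-- The zero-divisor graph of `ZMod n`: vertices are the nonzero zero-divisors,
with distinct vertices adjacent iff their product is zero. -/
def zdGraph (n : ℕ) : SimpleGraph (ZDVert n) where
  Adj a b := a ≠ b ∧ a.1 * b.1 = 0
  symm := by
    constructor
    rintro a b ⟨hab, h⟩
    exact ⟨hab.symm, by rwa [mul_comm] at h⟩
  loopless := by
    constructor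
    rintro a ⟨hne, -⟩
    exact hne rfl

/-- The barycentric subdivision of a simple graph: vertices are the disjoint union
of the original vertices and the edges, an original vertex is adjacent to an
edge-vertex iff it is an endpoint of that edge, and there are no other adjacencies. -/
def BS {V : Type*} (G : SimpleGraph V) : SimpleGraph (V ⊕ G.edgeSet) where
  Adj x y :=
    (∃ (v : V) (e : G.edgeSet), x = Sum.inl v ∧ y = Sum.inr e ∧ v ∈ e.1) ∨
    (∃ (v : V) (e : G.edgeSet), x = Sum.inr e ∧ y = Sum.inl v ∧ v ∈ e.1)
  symm := by
    constructor
    rintro x y (⟨v, e, rfl, rfl, h⟩ | ⟨v, e, rfl, rfl, h⟩)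
    · exact Or.inr ⟨v, e, rfl, rfl, h⟩
    · exact Or.inl ⟨v, e, rfl, rfl, h⟩
  loopless := by
    constructor
    rintro x (⟨v, e, rfl, h, -⟩ | ⟨v, e, rfl, h, -⟩) <;> simp at h

/-- A set of vertices is resolving if any two distinct vertices are distinguished
by their distance to some vertex of the set. -/
def IsResolving {V : Type*} (G : SimpleGraph V) (W : Set V) : Prop :=
  ∀ x y : V, x ≠ y → ∃ w ∈ W, G.dist x w ≠ G.dist y w

/-- The metric dimension: the least cardinality of a (finite) resolving set. -/
noncomputable def metricDim {V : Type*} (G : SimpleGraph V) : ℕ :=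
  sInf {k | ∃ W : Finset V, IsResolving G ↑W ∧ W.card = k}

/-- The independent metric dimension: the least cardinality of a (finite)
resolving set that is also an independent set. -/
noncomputable def indepMetricDim {V : Type*} (G : SimpleGraph V) : ℕ :=
  sInf {k | ∃ W : Finset V, IsResolving G ↑W ∧
    (∀ a ∈ W, ∀ b ∈ W, ¬ G.Adj a b) ∧ W.card = k}

section BSlemmas
variable {V : Type*} {G : SimpleGraph V}

lemma BS_adj_inl_inr {v : V} {e : G.edgeSet} :
    (BS G).Adj (Sum.inl v) (Sum.inr e) ↔ v ∈ e.1 := by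
  constructor
  · rintro (⟨v', e', h1, h2, h3⟩ | ⟨v', e', h1, h2, h3⟩)
    · rw [Sum.inl.injEq] at h1; rw [Sum.inr.injEq] at h2; subst h1; subst h2; exact h3
    · exact absurd h1 (by simp)
  · intro h
    exact Or.inl ⟨v, e, rfl, rfl, h⟩

lemma BS_not_adj_inl_inl {v w : V} : ¬ (BS G).Adj (Sum.inl v) (Sum.inl w) := by
  rintro (⟨v', e', h1, h2, h3⟩ | ⟨v', e', h1, h2, h3⟩) <;> simp at h1 h2

lemma BS_not_adj_inr_inr {e f : G.edgeSet} : ¬ (BS G).Adj (Sum.inr e) (Sum.inr f) := by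
  rintro (⟨v', e', h1, h2, h3⟩ | ⟨v', e', h1, h2, h3⟩) <;> simp at h1 h2

lemma BS_adj_inr_inl {v : V} {e : G.edgeSet} :
    (BS G).Adj (Sum.inr e) (Sum.inl v) ↔ v ∈ e.1 := by
  rw [(BS G).adj_comm]; exact BS_adj_inl_inr

lemma mapEdgeSet_coe (φ : G ≃g G) (e : G.edgeSet) :
    (φ.mapEdgeSet e).1 = Sym2.map φ e.1 := rfl

lemma mem_mapEdgeSet (φ : G ≃g G) (v : V) (e : G.edgeSet) :
    φ v ∈ (φ.mapEdgeSet e).1 ↔ v ∈ e.1 := by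
  rw [mapEdgeSet_coe, Sym2.mem_map]
  constructor
  · rintro ⟨a, ha, hav⟩
    rwa [← φ.toEquiv.injective hav]
  · intro h; exact ⟨v, h, rfl⟩

/-- Extend an automorphism of `G` to an automorphism of `BS G`. -/
def BSiso (φ : G ≃g G) : BS G ≃g BS G where
  toEquiv := Equiv.sumCongr φ.toEquiv φ.mapEdgeSet
  map_rel_iff' := by
    rintro (v | e) (w | f)
    · simp only [Equiv.sumCongr_apply, Sum.map_inl]
      exact iff_of_false BS_not_adj_inl_inl BS_not_adj_inl_inl
    · simp only [Equiv.sumCongr_apply, Sum.map_inl, Sum.map_inr]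
      rw [BS_adj_inl_inr, BS_adj_inl_inr]
      exact mem_mapEdgeSet φ v f
    · simp only [Equiv.sumCongr_apply, Sum.map_inl, Sum.map_inr]
      rw [BS_adj_inr_inl, BS_adj_inr_inl]
      exact mem_mapEdgeSet φ w e
    · simp only [Equiv.sumCongr_apply, Sum.map_inr]
      exact iff_of_false BS_not_adj_inr_inr BS_not_adj_inr_inr

lemma BSiso_fixes_inl (φ : G ≃g G) {v : V} (h : φ v = v) :
    BSiso φ (Sum.inl v) = Sum.inl v := by
  simp [BSiso, h]

lemma BSiso_inl (φ : G ≃g G) (v : V) :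
    BSiso φ (Sum.inl v) = Sum.inl (φ v) := rfl

lemma BSiso_fixes_inr (φ : G ≃g G) {e : G.edgeSet} (h : ∀ a ∈ e.1, φ a = a) :
    BSiso φ (Sum.inr e) = Sum.inr e := by
  have : φ.mapEdgeSet e = e := by
    apply Subtype.ext
    rw [mapEdgeSet_coe]
    obtain ⟨z, hz⟩ := e
    induction z using Sym2.ind with
    | _ a b =>
      rw [Sym2.map_pair_eq, h a (by simp), h b (by simp)]
  simp [BSiso, this]

end BSlemmas
noncomputable instance (n : ℕ) : DecidableEq (ZDVert n) := Classical.decEq _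

section Swap
variable {n : ℕ}

/-- Swapping two vertices with the same annihilator is an automorphism of the
zero-divisor graph. -/
noncomputable def swapIso (v v' : ZDVert n) (h : ∀ x : ZMod n, v.1 * x = 0 ↔ v'.1 * x = 0) :
    zdGraph n ≃g zdGraph n where
  toEquiv := Equiv.swap v v'
  map_rel_iff' := by
    have key : ∀ (a : ZDVert n) (x : ZMod n),
        (Equiv.swap v v' a).1 * x = 0 ↔ a.1 * x = 0 := by
      intro a x
      rcases eq_or_ne a v with rfl | hav
      · rw [Equiv.swap_apply_left]; exact (h x).symm
      rcases eq_or_ne a v' with rfl | hav'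
      · rw [Equiv.swap_apply_right]; exact h x
      · rw [Equiv.swap_apply_of_ne_of_ne hav hav']
    intro a b
    show (_ ≠ _ ∧ _) ↔ (_ ≠ _ ∧ _)
    refine and_congr (not_congr ⟨fun hh => (Equiv.swap v v').injective hh, fun hh => by rw [hh]⟩) ?_
    rw [key a, mul_comm, key b, mul_comm]

lemma swapIso_left (v v' : ZDVert n) (h) : swapIso v v' h v = v' := Equiv.swap_apply_left v v'

lemma swapIso_of_ne (v v' : ZDVert n) (h) {a : ZDVert n} (h1 : a ≠ v) (h2 : a ≠ v') :
    swapIso v v' h a = a := Equiv.swap_apply_of_ne_of_ne h1 h2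

end Swap

/-- A graph with no isolated vertices is resolved by the full vertex set. -/
lemma isResolving_univ {V : Type*} [Fintype V] {G : SimpleGraph V}
    (hdeg : ∀ x : V, ∃ z, G.Adj x z) : IsResolving G ↑(Finset.univ : Finset V) := by
  intro x y hxy
  by_cases h : G.dist x y = 0
  · have hnr : ¬ G.Reachable x y := by
      rcases SimpleGraph.dist_eq_zero_iff_eq_or_not_reachable.mp h with h' | h'
      · exact absurd h' hxy
      · exact h'
    obtain ⟨z, hz⟩ := hdeg x
    refine ⟨z, by simp, ?_⟩
    rw [SimpleGraph.dist_eq_one_iff_adj.mpr hz]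
    intro h1
    have hyz : G.Adj y z := SimpleGraph.dist_eq_one_iff_adj.mp h1.symm
    exact hnr (hz.reachable.trans hyz.reachable.symm)
  · exact ⟨y, by simp, by rwa [SimpleGraph.dist_self]⟩
section Arith
variable {p q : ℕ}

lemma pq_nezero (hp : p.Prime) (hq : q.Prime) : NeZero (p * q) :=
  ⟨Nat.mul_ne_zero hp.pos.ne' hq.pos.ne'⟩

lemma vtx_ne_zero (hp : p.Prime) (hq : q.Prime) {k : ℕ} (hk1 : 1 ≤ k) (hkq : k < q) :
    ((k * p : ℕ) : ZMod (p * q)) ≠ 0 := by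
  haveI := pq_nezero hp hq
  rw [Ne, ZMod.natCast_eq_zero_iff]
  intro hdvd
  have : q ∣ k := by
    have h1 : p * q ∣ p * k := by rwa [mul_comm k p] at hdvd
    exact (Nat.mul_dvd_mul_iff_left hp.pos).mp h1
  exact absurd (Nat.le_of_dvd hk1 this) (not_le.mpr hkq)

lemma qcast_ne_zero (hp : p.Prime) (hq : q.Prime) : ((q : ℕ) : ZMod (p * q)) ≠ 0 := by
  haveI := pq_nezero hp hq
  rw [Ne, ZMod.natCast_eq_zero_iff]
  intro hdvd
  have := Nat.le_of_dvd hq.pos hdvd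
  nlinarith [hp.two_le, hq.pos]

lemma vtx_zd (hp : p.Prime) (hq : q.Prime) (k : ℕ) :
    ((k * p : ℕ) : ZMod (p * q)) * ((q : ℕ) : ZMod (p * q)) = 0 := by
  haveI := pq_nezero hp hq
  rw [← Nat.cast_mul, ZMod.natCast_eq_zero_iff]
  exact ⟨k, by ring⟩

lemma vtx_prop (hp : p.Prime) (hq : q.Prime) {k : ℕ} (hk1 : 1 ≤ k) (hkq : k < q) :
    ((k * p : ℕ) : ZMod (p * q)) ≠ 0 ∧
      ∃ b : ZMod (p * q), b ≠ 0 ∧ ((k * p : ℕ) : ZMod (p * q)) * b = 0 :=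
  ⟨vtx_ne_zero hp hq hk1 hkq, ((q : ℕ) : ZMod (p * q)), qcast_ne_zero hp hq, vtx_zd hp hq k⟩

lemma vtx_inj (hp : p.Prime) (hq : q.Prime) {k k' : ℕ} (hkq : k < q) (hkq' : k' < q)
    (h : ((k * p : ℕ) : ZMod (p * q)) = ((k' * p : ℕ) : ZMod (p * q))) : k = k' := by
  haveI := pq_nezero hp hq
  have h1 : k * p < p * q := by rw [mul_comm p q]; exact Nat.mul_lt_mul_right hp.pos |>.mpr hkq
  have h2 : k' * p < p * q := by rw [mul_comm p q]; exact Nat.mul_lt_mul_right hp.pos |>.mpr hkq'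
  have := congrArg ZMod.val h
  rw [ZMod.val_cast_of_lt h1, ZMod.val_cast_of_lt h2] at this
  exact Nat.eq_of_mul_eq_mul_right hp.pos this

lemma vtx_ann (hp : p.Prime) (hq : q.Prime) {k : ℕ} (hk1 : 1 ≤ k) (hkq : k < q)
    (x : ZMod (p * q)) : ((k * p : ℕ) : ZMod (p * q)) * x = 0 ↔ q ∣ x.val := by
  haveI := pq_nezero hp hq
  conv_lhs => rw [← ZMod.natCast_zmod_val x, ← Nat.cast_mul,
    ZMod.natCast_eq_zero_iff]
  constructor
  · intro hdvd
    have h1 : q ∣ k * x.val := by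
      have : p * q ∣ p * (k * x.val) := by
        have : k * p * x.val = p * (k * x.val) := by ring
        rwa [this] at hdvd
      exact (Nat.mul_dvd_mul_iff_left hp.pos).mp this
    rcases (Nat.Prime.dvd_mul hq).mp h1 with h | h
    · exact absurd (Nat.le_of_dvd hk1 h) (not_le.mpr hkq)
    · exact h
  · rintro ⟨m, hm⟩
    exact ⟨k * m, by rw [hm]; ring⟩

lemma vtx_not_orth (hp : p.Prime) (hq : q.Prime) (hpq : p < q) {k k' : ℕ}
    (hk1 : 1 ≤ k) (hkq : k < q) (hk1' : 1 ≤ k') (hkq' : k' < q) :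
    ((k * p : ℕ) : ZMod (p * q)) * ((k' * p : ℕ) : ZMod (p * q)) ≠ 0 := by
  haveI := pq_nezero hp hq
  intro h0
  rw [vtx_ann hp hq hk1 hkq] at h0
  have h2 : k' * p < p * q := by rw [mul_comm p q]; exact Nat.mul_lt_mul_right hp.pos |>.mpr hkq'
  rw [ZMod.val_cast_of_lt h2] at h0
  rcases (Nat.Prime.dvd_mul hq).mp h0 with h | h
  · exact absurd (Nat.le_of_dvd hk1' h) (not_le.mpr hkq')
  · exact absurd (Nat.le_of_dvd hp.pos h) (not_le.mpr hpq)

lemma sq_ne_zero (hp : p.Prime) (hq : q.Prime) (hpq : p < q) (v : ZDVert (p * q)) :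
    v.1 * v.1 ≠ 0 := by
  haveI := pq_nezero hp hq
  intro h
  apply v.2.1
  have hv : (v.1.val : ZMod (p * q)) = v.1 := ZMod.natCast_zmod_val v.1
  rw [← hv, ← Nat.cast_mul, ZMod.natCast_eq_zero_iff] at h
  have hpd : p ∣ v.1.val := hp.dvd_of_dvd_pow (n := 2) (by
    rw [pow_two]; exact dvd_trans (Dvd.intro q rfl) h)
  have hqd : q ∣ v.1.val := hq.dvd_of_dvd_pow (n := 2) (by
    rw [pow_two]; exact dvd_trans (Dvd.intro_left p rfl) h)
  have hcop : Nat.Coprime p q := (Nat.coprime_primes hp hq).mpr hpq.ne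
  have : p * q ∣ v.1.val := Nat.Coprime.mul_dvd_of_dvd_of_dvd hcop hpd hqd
  have hlt : v.1.val < p * q := ZMod.val_lt v.1
  have hval0 : v.1.val = 0 := Nat.eq_zero_of_dvd_of_lt this hlt
  rw [← hv, hval0, Nat.cast_zero]

end Arith
lemma key (p q : ℕ) (hp : p.Prime) (hq : q.Prime) (hpq : p < q)
    (W : Finset (ZDVert (p * q) ⊕ (zdGraph (p * q)).edgeSet))
    (hW : IsResolving (BS (zdGraph (p * q))) ↑W) : q - 2 ≤ W.card := by
  classical
  haveI := pq_nezero hp hq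
  have hq2 : 2 < q := lt_of_le_of_lt hp.two_le hpq
  -- `Touch k w` : the BS-vertex `w` is the vertex `k*p` or an edge containing it.
  set Touch : ℕ → (ZDVert (p * q) ⊕ (zdGraph (p * q)).edgeSet) → Prop := fun k w =>
    (∃ u : ZDVert (p * q), w = Sum.inl u ∧ u.1 = ((k * p : ℕ) : ZMod (p * q))) ∨
    (∃ e : (zdGraph (p * q)).edgeSet, w = Sum.inr e ∧
      ∃ u, u ∈ e.1 ∧ u.1 = ((k * p : ℕ) : ZMod (p * q))) with hTouch
  have claimA : ∀ k k', 1 ≤ k → k < q → 1 ≤ k' → k' < q → k ≠ k' →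
      (∃ w ∈ W, Touch k w) ∨ (∃ w ∈ W, Touch k' w) := by
    intro k k' hk1 hkq hk1' hkq' hkk'
    by_contra hcon
    push_neg at hcon
    obtain ⟨h1, h2⟩ := hcon
    set v : ZDVert (p * q) := ⟨_, vtx_prop hp hq hk1 hkq⟩ with hv
    set v' : ZDVert (p * q) := ⟨_, vtx_prop hp hq hk1' hkq'⟩ with hv'
    have hvv' : v ≠ v' := fun h => hkk' (vtx_inj hp hq hkq hkq' (congrArg Subtype.val h))
    have hann : ∀ x, v.1 * x = 0 ↔ v'.1 * x = 0 := fun x =>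
      (vtx_ann hp hq hk1 hkq x).trans (vtx_ann hp hq hk1' hkq' x).symm
    set σ := swapIso v v' hann with hσ
    set Φ := BSiso σ with hΦ
    obtain ⟨w, hwW, hdist⟩ := hW (Sum.inl v) (Sum.inl v') (by simp [hvv'])
    apply hdist
    have hfix : Φ w = w := by
      match w with
      | Sum.inl u =>
        have hu : u ≠ v := fun h => h1 _ hwW (Or.inl ⟨u, rfl, by rw [h]⟩)
        have hu' : u ≠ v' := fun h => h2 _ hwW (Or.inl ⟨u, rfl, by rw [h]⟩)
        exact BSiso_fixes_inl σ (swapIso_of_ne v v' hann hu hu')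
      | Sum.inr e =>
        refine BSiso_fixes_inr σ (fun a ha => ?_)
        have ha1 : a ≠ v := fun h => h1 _ hwW (Or.inr ⟨e, rfl, a, ha, by rw [h]⟩)
        have ha2 : a ≠ v' := fun h => h2 _ hwW (Or.inr ⟨e, rfl, a, ha, by rw [h]⟩)
        exact swapIso_of_ne v v' hann ha1 ha2
    have hde := iso_dist_eq Φ (Sum.inl v) w
    rw [hfix] at hde
    have hΦv : Φ (Sum.inl v) = Sum.inl v' := by
      rw [hΦ, BSiso_inl, hσ, swapIso_left]
    rw [hΦv] at hde
    exact hde.symm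
  -- counting
  have hbad : ((Finset.Ico 1 q).filter (fun k => ¬ ∃ w ∈ W, Touch k w)).card ≤ 1 := by
    rw [Finset.card_le_one]
    intro a ha b hb
    simp only [Finset.mem_filter, Finset.mem_Ico] at ha hb
    by_contra hab
    rcases claimA a b ha.1.1 ha.1.2 hb.1.1 hb.1.2 hab with h | h
    exacts [ha.2 h, hb.2 h]
  set Tg : Finset ℕ := (Finset.Ico 1 q).filter (fun k => ∃ w ∈ W, Touch k w) with hTg
  have hTgcard : q - 2 ≤ Tg.card := by
    have := Finset.card_filter_add_card_filter_not
      (s := Finset.Ico 1 q) (p := fun k => ∃ w ∈ W, Touch k w)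
    rw [Nat.card_Ico, ← hTg] at this
    omega
  refine le_trans hTgcard ?_
  set v₁ : ZDVert (p * q) := ⟨_, vtx_prop hp hq le_rfl (by omega : (1:ℕ) < q)⟩ with hv₁
  refine Finset.card_le_card_of_injOn
    (fun k => if h : ∃ w ∈ W, Touch k w then h.choose else Sum.inl v₁) ?_ ?_
  · intro k hk
    rw [hTg, Finset.mem_coe, Finset.mem_filter] at hk
    dsimp only
    rw [dif_pos hk.2]
    exact hk.2.choose_spec.1
  · intro a ha b hb hfab
    simp only [Finset.coe_filter, Set.mem_setOf_eq, Finset.mem_Ico, hTg,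
      Finset.coe_sort_coe] at ha hb
    obtain ⟨⟨ha1, haq⟩, hga⟩ := ha
    obtain ⟨⟨hb1, hbq⟩, hgb⟩ := hb
    dsimp only at hfab
    rw [dif_pos hga, dif_pos hgb] at hfab
    have hsa := hga.choose_spec.2
    have hsb := hgb.choose_spec.2
    rw [hfab] at hsa
    by_contra hab
    rcases hsa with ⟨u, hu, huv⟩ | ⟨e, he, u, hue, huv⟩
    · rcases hsb with ⟨u', hu', huv'⟩ | ⟨e', he', _⟩
      · rw [hu'] at hu
        rw [Sum.inl.injEq] at hu
        subst hu
        exact hab (vtx_inj hp hq haq hbq (huv ▸ huv'))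
      · rw [he'] at hu; simp at hu
    · rcases hsb with ⟨u', hu', _⟩ | ⟨e', he', u', hue', huv'⟩
      · rw [hu'] at he; simp at he
      · rw [he'] at he
        rw [Sum.inr.injEq] at he
        subst he
        have huu' : u ≠ u' := by
          intro h
          rw [h] at huv
          exact hab (vtx_inj hp hq haq hbq (huv ▸ huv'))
        have hee : e'.1 = s(u, u') := (Sym2.mem_and_mem_iff huu').mp ⟨hue, hue'⟩
        have hadj : (zdGraph (p * q)).Adj u u' := by
          rw [← SimpleGraph.mem_edgeSet, ← hee]
          exact e'.2
        exact vtx_not_orth hp hq hpq ha1 haq hb1 hbq (huv ▸ huv' ▸ hadj.2)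
theorem stmt7 (p q : ℕ) (hp : p.Prime) (hq : q.Prime) (hpq : p < q) :
    q - 2 ≤ metricDim (BS (zdGraph (p * q))) ∧
      ∀ W : Finset (ZDVert (p * q) ⊕ (zdGraph (p * q)).edgeSet),
        IsResolving (BS (zdGraph (p * q))) ↑W → q - 2 ≤ W.card := by
  classical
  haveI := pq_nezero hp hq
  haveI hfin : Finite (ZDVert (p * q)) := by unfold ZDVert; infer_instance
  haveI hfinE : Finite ((zdGraph (p * q)).edgeSet) := by infer_instance
  haveI : Fintype (ZDVert (p * q) ⊕ (zdGraph (p * q)).edgeSet) := Fintype.ofFinite _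
  have hdeg : ∀ x : ZDVert (p * q) ⊕ (zdGraph (p * q)).edgeSet,
      ∃ z, (BS (zdGraph (p * q))).Adj x z := by
    rintro (v | e)
    · obtain ⟨b, hb0, hvb⟩ := v.2.2
      set u : ZDVert (p * q) := ⟨b, hb0, v.1, v.2.1, by rw [mul_comm b v.1]; exact hvb⟩ with hu
      have hne : v ≠ u := by
        intro h
        apply sq_ne_zero hp hq hpq v
        have : v.1 = b := congrArg Subtype.val h
        rw [this] at hvb ⊢
        exact hvb
      have hadj : (zdGraph (p * q)).Adj v u := ⟨hne, hvb⟩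
      refine ⟨Sum.inr ⟨s(v, u), (SimpleGraph.mem_edgeSet _).mpr hadj⟩, ?_⟩
      rw [BS_adj_inl_inr]
      exact Sym2.mem_mk_left v u
    · exact ⟨Sum.inl e.1.out.1, BS_adj_inr_inl.mpr (Sym2.out_fst_mem e.1)⟩
  refine ⟨?_, key p q hp hq hpq⟩
  have hne : {k | ∃ W : Finset (ZDVert (p * q) ⊕ (zdGraph (p * q)).edgeSet),
      IsResolving (BS (zdGraph (p * q))) ↑W ∧ W.card = k}.Nonempty :=
    ⟨_, Finset.univ, isResolving_univ hdeg, rfl⟩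
  obtain ⟨W, hres, hcard⟩ := Nat.sInf_mem hne
  show q - 2 ≤ sInf _
  exact hcard ▸ key p q hp hq hpq W hres
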